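/- Let R be a unital (not necessarily commutative) ring and let D₁, D₂, D̃₁, D̃₂, φ₁, ψ₁, φ₂, ψ₂ ∈ R. Assume: (i) φ₁² + ψ₁² = 1 and φ₂² + ψ₂² = 1; (ii) the four elements φ₁, ψ₁, φ₂, ψ₂ pairwise commute and φ₁ψ₂ = ψ₁φ₂; (iii) D̃₁φ₁ = D₁φ₁, D̃₂φ₂ = D₂φ₂, D̃₂ψ₁ = D₁ψ₁, and D̃₁ψ₂ = D₂ψ₂. Then, writing [a,b] := ab − ba, one has the identity of 2×2 matrices over R: [[φ₁, −ψ₁],[ψ₂, φ₂]] · [[D̃₁, 0],[0, D̃₂]] · [[φ₁, ψ₂],[−ψ₁, φ₂]] − [[D₁, 0],[0, D₂]] = [[ −[D₁,φ₁]φ₁ − [D₁,ψ₁]ψ₁ , φ₁[D₂,ψ₂] − ψ₁[D₂,φ₂] ],[ ψ₂[D₁,φ₁] − φ₂[D₁,ψ₁] , −[D₂,φ₂]φ₂ − [D₂,ψ₂]ψ₂ ]]. -/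
import Mathlib


/-- The key computation `K = Ψ·D̃·Φ − D` in the proof of the excision theorem
for determinant line bundles: the difference is a matrix of commutator terms. -/
theorem excision_compact_remainder
    {R : Type*} [Ring R] (D₁ D₂ Dt₁ Dt₂ φ₁ ψ₁ φ₂ ψ₂ : R)
    (h1 : φ₁ * φ₁ + ψ₁ * ψ₁ = 1)
    (h2 : φ₂ * φ₂ + ψ₂ * ψ₂ = 1)
    (c12 : φ₁ * φ₂ = φ₂ * φ₁) (c13 : φ₁ * ψ₁ = ψ₁ * φ₁)
    (c14 : φ₁ * ψ₂ = ψ₂ * φ₁) (c23 : φ₂ * ψ₁ = ψ₁ * φ₂)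
    (c24 : φ₂ * ψ₂ = ψ₂ * φ₂) (c34 : ψ₁ * ψ₂ = ψ₂ * ψ₁)
    (hmix : φ₁ * ψ₂ = ψ₁ * φ₂)
    (e1 : Dt₁ * φ₁ = D₁ * φ₁)
    (e2 : Dt₂ * φ₂ = D₂ * φ₂)
    (e3 : Dt₂ * ψ₁ = D₁ * ψ₁)
    (e4 : Dt₁ * ψ₂ = D₂ * ψ₂) :
    (!![φ₁, -ψ₁; ψ₂, φ₂] : Matrix (Fin 2) (Fin 2) R) * !![Dt₁, 0; 0, Dt₂] *
        !![φ₁, ψ₂; -ψ₁, φ₂] - !![D₁, 0; 0, D₂] =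
      !![-((D₁ * φ₁ - φ₁ * D₁) * φ₁) - (D₁ * ψ₁ - ψ₁ * D₁) * ψ₁,
          φ₁ * (D₂ * ψ₂ - ψ₂ * D₂) - ψ₁ * (D₂ * φ₂ - φ₂ * D₂);
         ψ₂ * (D₁ * φ₁ - φ₁ * D₁) - φ₂ * (D₁ * ψ₁ - ψ₁ * D₁),
          -((D₂ * φ₂ - φ₂ * D₂) * φ₂) - (D₂ * ψ₂ - ψ₂ * D₂) * ψ₂] := by

  ext i j
  fin_cases i <;> fin_cases j <;>
    simp [Matrix.mul_apply, Fin.sum_univ_two, Matrix.sub_apply]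
  · linear_combination (norm := noncomm_ring) φ₁ * e1 + ψ₁ * e3 + D₁ * h1
  · linear_combination (norm := noncomm_ring) φ₁ * e4 - ψ₁ * e2 + hmix * D₂
  · linear_combination (norm := noncomm_ring) ψ₂ * e1 - φ₂ * e3 + (c14.symm.trans (hmix.trans c23.symm)) * D₁
  · linear_combination (norm := noncomm_ring) φ₂ * e2 + ψ₂ * e4 + D₂ * h2
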